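/- Let X and Y be Hilbert spaces, T : X → Y a bounded linear operator with a least-squares projection approximation {(X_n, T_n)}, and fix y ∈ D(T†). Then T_n† y converges in norm to T† y if and only if limsup_{n→∞} ‖T_n† y‖ ≤ ‖T† y‖. -/

import Mathlib

/-!
Write `x = T†y` and `xₙ = Tₙ†y`. Since `N(Tₙ) ⊇ Xₙ^⊥`, `xₙ ∈ Xₙ`, and `T xₙ` is the best
approximation of `y` in `T(Xₙ)`; as `y - T x ⊥ cl R(T)`, comparing with `T Pₙ x` gives
`‖T xₙ - T x‖² ≤ ‖y - T Pₙ x‖² - ‖y - T x‖² → 0`. Hence `⟪xₙ, T*w⟫ = ⟪T xₙ, w⟫ → ⟪x, T*w⟫`, and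
because the limsup bound makes `(xₙ)` eventually bounded, this passes to the closure of `R(T*)`,
which is `N(T)^⊥ ∋ x`. So `⟪xₙ, x⟫ → ‖x‖²`, and `‖xₙ - x‖² = ‖xₙ‖² - 2⟪xₙ, x⟫ + ‖x‖²` has
limsup at most `0`.
-/

open Filter Topology Metric Submodule ContinuousLinearMap

/-- Orthogonal projection onto a subspace `K` (as an operator `H →L[ℝ] H`),
defined whenever `K` admits orthogonal projections (e.g. `K` closed). -/
noncomputable def orthProj {H : Type*} [NormedAddCommGroup H] [InnerProductSpace ℝ H]
    (K : Submodule ℝ H) : H →L[ℝ] H :=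
  open scoped Classical in
  if h : HasOrthogonalProjection K then
    haveI := h
    K.subtypeL.comp (orthogonalProjection K)
  else 0

open scoped RealInnerProductSpace

lemma orthProj_eq_starProjection {H : Type*} [NormedAddCommGroup H] [InnerProductSpace ℝ H]
    (K : Submodule ℝ H) [h : HasOrthogonalProjection K] : orthProj K = K.starProjection := by
  simp only [orthProj, dif_pos h]
  rfl

lemma eventually_lt_of_limsup_coe_le {ι : Type*} {l : Filter ι} {f : ι → ℝ} {a c : ℝ}
    (hf : limsup (fun i => (f i : EReal)) l ≤ a) (hac : a < c) : ∀ᶠ i in l, f i < c :=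
  (eventually_lt_of_limsup_lt (hf.trans_lt (EReal.coe_lt_coe_iff.2 hac))).mono
    fun _ => EReal.coe_lt_coe_iff.1

lemma tendsto_of_tendsto_sq_norm_sub {E ι : Type*} [SeminormedAddCommGroup E] {l : Filter ι}
    {u : ι → E} {x : E} (h : Tendsto (fun i => ‖u i - x‖ ^ 2) l (𝓝 0)) : Tendsto u l (𝓝 x) := by
  rw [tendsto_iff_norm_sub_tendsto_zero]
  simpa [Real.sqrt_sq (norm_nonneg _)] using h.sqrt

section InnerProductSpace

variable {E : Type*} [NormedAddCommGroup E] [InnerProductSpace ℝ E] {ι : Type*} {l : Filter ι}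

/-- Pythagoras twice: `y - K.starProjection y ⊥ K` and `y - p ⊥ M ⊇ K`. -/
lemma sq_norm_starProjection_sub_le {M K : Submodule ℝ E} [K.HasOrthogonalProjection]
    (hKM : K ≤ M) {y p v : E} (hp : p ∈ M) (hyp : y - p ∈ Mᗮ) (hv : v ∈ K) :
    ‖K.starProjection y - p‖ ^ 2 ≤ ‖y - v‖ ^ 2 - ‖y - p‖ ^ 2 := by
  have hK : ‖y - v‖ ^ 2 = ‖y - K.starProjection y‖ ^ 2 + ‖K.starProjection y - v‖ ^ 2 := by
    have horth : ⟪y - K.starProjection y, K.starProjection y - v⟫ = 0 :=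
      K.starProjection_inner_eq_zero y _ (K.sub_mem (K.starProjection_apply_mem y) hv)
    rw [← sub_add_sub_cancel y (K.starProjection y), norm_add_sq_real, horth]
    ring
  have hM : ‖y - K.starProjection y‖ ^ 2 = ‖y - p‖ ^ 2 + ‖K.starProjection y - p‖ ^ 2 := by
    have horth : ⟪y - p, p - K.starProjection y⟫ = 0 :=
      (mem_orthogonal' M _).1 hyp _ (M.sub_mem hp (hKM (K.starProjection_apply_mem y)))
    rw [← sub_add_sub_cancel y p, norm_add_sq_real, horth, norm_sub_rev p]
    ring
  linarith [sq_nonneg ‖K.starProjection y - v‖]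

lemma tendsto_starProjection_of_tendsto {M : Submodule ℝ E} {K : ι → Submodule ℝ E}
    [∀ i, (K i).HasOrthogonalProjection] (hKM : ∀ i, K i ≤ M) {y p : E} (hp : p ∈ M)
    (hyp : y - p ∈ Mᗮ) {v : ι → E} (hv : ∀ i, v i ∈ K i) (hvp : Tendsto v l (𝓝 p)) :
    Tendsto (fun i => (K i).starProjection y) l (𝓝 p) := by
  have hbound : Tendsto (fun i => ‖y - v i‖ ^ 2 - ‖y - p‖ ^ 2) l (𝓝 0) := by
    have h := (((tendsto_const_nhds (x := y)).sub hvp).norm.pow 2).sub_const (‖y - p‖ ^ 2)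
    rwa [sub_self] at h
  have hsq : Tendsto (fun i => ‖(K i).starProjection y - p‖ ^ 2) l (𝓝 0) :=
    squeeze_zero (fun _ => sq_nonneg _)
      (fun i => sq_norm_starProjection_sub_le (hKM i) hp hyp (hv i)) hbound
  exact tendsto_of_tendsto_sq_norm_sub hsq

lemma tendsto_inner_of_mem_closure {u : ι → E} {C : ℝ} (hu : ∀ᶠ i in l, ‖u i‖ ≤ C) {x : E}
    {S : Set E} (hS : ∀ w ∈ S, Tendsto (fun i => ⟪u i, w⟫) l (𝓝 ⟪x, w⟫)) {v : E}
    (hv : v ∈ closure S) : Tendsto (fun i => ⟪u i, v⟫) l (𝓝 ⟪x, v⟫) := by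
  refine Metric.tendsto_nhds.2 fun ε hε => ?_
  set D := |C| + ‖x‖ + 1
  have hD : 0 < D := by positivity
  obtain ⟨w, hwS, hvw⟩ := Metric.mem_closure_iff.1 hv (ε / (2 * D)) (by positivity)
  filter_upwards [hu, Metric.tendsto_nhds.1 (hS w hwS) (ε / 2) (half_pos hε)] with i hui hiw
  have hux : ‖u i - x‖ ≤ D := by
    linarith [norm_sub_le (u i) x, le_abs_self C]
  calc dist ⟪u i, v⟫ ⟪x, v⟫ = |⟪u i - x, v - w⟫ + (⟪u i, w⟫ - ⟪x, w⟫)| := by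
        rw [Real.dist_eq]
        simp only [inner_sub_left, inner_sub_right]
        ring_nf
    _ ≤ ‖u i - x‖ * ‖v - w‖ + dist ⟪u i, w⟫ ⟪x, w⟫ := by
        rw [Real.dist_eq]
        exact (abs_add_le _ _).trans (add_le_add_left (abs_real_inner_le_norm _ _) _)
    _ < D * (ε / (2 * D)) + ε / 2 := by
        rw [← dist_eq_norm v w]
        exact add_lt_add_of_le_of_lt (mul_le_mul hux hvw.le dist_nonneg hD.le) hiw
    _ = ε := by field_simp; ring

/-- The Radon–Riesz property of Hilbert spaces, via `‖u - x‖² = ‖u‖² - 2⟪u, x⟫ + ‖x‖²`. -/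
lemma tendsto_of_tendsto_inner_of_limsup_norm_le {u : ι → E} {x : E}
    (hinner : Tendsto (fun i => ⟪u i, x⟫) l (𝓝 (‖x‖ ^ 2)))
    (hnorm : limsup (fun i => (‖u i‖ : EReal)) l ≤ ‖x‖) : Tendsto u l (𝓝 x) := by
  refine tendsto_of_tendsto_sq_norm_sub (tendsto_order.2
    ⟨fun a ha => Eventually.of_forall fun i => ha.trans_le (sq_nonneg _), fun ε hε => ?_⟩)
  have hc : ‖x‖ < √(‖x‖ ^ 2 + ε / 2) := (Real.lt_sqrt (norm_nonneg _)).2 (by linarith)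
  filter_upwards [eventually_lt_of_limsup_coe_le hnorm hc,
    hinner.eventually (lt_mem_nhds (show ‖x‖ ^ 2 - ε / 4 < ‖x‖ ^ 2 by linarith))] with i hu hux
  rw [norm_sub_sq_real]
  linarith [(Real.lt_sqrt (norm_nonneg _)).1 hu]

end InnerProductSpace

section Operator

variable {X Y : Type*} [NormedAddCommGroup X] [InnerProductSpace ℝ X]
  [NormedAddCommGroup Y] [InnerProductSpace ℝ Y]

lemma orthogonal_ker_comp_starProjection_le (T : X →L[ℝ] Y) (K : Submodule ℝ X)
    [K.HasOrthogonalProjection] :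
    (LinearMap.ker (T.comp K.starProjection : X →ₗ[ℝ] Y))ᗮ ≤ K := by
  have hK : Kᗮ ≤ LinearMap.ker (T.comp K.starProjection : X →ₗ[ℝ] Y) := fun u hu => by
    simp [K.starProjection_apply_eq_zero_iff.2 hu]
  simpa only [orthogonal_orthogonal] using orthogonal_le hK

lemma tendsto_inner_of_tendsto_apply [CompleteSpace X] [CompleteSpace Y] (T : X →L[ℝ] Y)
    {ι : Type*} {l : Filter ι} {u : ι → X} {C : ℝ} (hu : ∀ᶠ i in l, ‖u i‖ ≤ C) {x : X}
    (hTu : Tendsto (fun i => T (u i)) l (𝓝 (T x))) {v : X}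
    (hv : v ∈ (LinearMap.ker (T : X →ₗ[ℝ] Y))ᗮ) :
    Tendsto (fun i => ⟪u i, v⟫) l (𝓝 ⟪x, v⟫) := by
  rw [show LinearMap.ker (T : X →ₗ[ℝ] Y) = T.ker from rfl, orthogonal_ker,
    ← SetLike.mem_coe, topologicalClosure_coe] at hv
  refine tendsto_inner_of_mem_closure hu ?_ hv
  rintro _ ⟨w, rfl⟩
  simpa only [coe_coe, adjoint_inner_right] using hTu.inner tendsto_const_nhds

end Operator

variable {X Y : Type*} [NormedAddCommGroup X] [InnerProductSpace ℝ X] [CompleteSpace X]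
  [NormedAddCommGroup Y] [InnerProductSpace ℝ Y] [CompleteSpace Y]

theorem stmt17_general
    (T : X →L[ℝ] Y) (Xn : ℕ → Submodule ℝ X)
    (hfin : ∀ n, FiniteDimensional ℝ (Xn n))
    (hproj : ∀ x : X, Tendsto (fun n => orthProj (Xn n) x) atTop (𝓝 x))
    (Tn : ℕ → X →L[ℝ] Y) (hTn : ∀ n, Tn n = T.comp (orthProj (Xn n)))
    (Tdag : Y → X)
    (hTdag : ∀ y ∈ (LinearMap.range (T : X →ₗ[ℝ] Y) ⊔ (LinearMap.range (T : X →ₗ[ℝ] Y))ᗮ : Submodule ℝ Y),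
      Tdag y ∈ (LinearMap.ker (T : X →ₗ[ℝ] Y))ᗮ ∧
        T (Tdag y) = orthProj (LinearMap.range (T : X →ₗ[ℝ] Y)).topologicalClosure y)
    (Tdagn : ℕ → Y → X)
    (hTdagn : ∀ n (y : Y), Tdagn n y ∈ (LinearMap.ker (Tn n : X →ₗ[ℝ] Y))ᗮ ∧
      (Tn n) (Tdagn n y) = orthProj ((Xn n).map (T : X →ₗ[ℝ] Y)) y)
    (y : Y) (hy : y ∈ (LinearMap.range (T : X →ₗ[ℝ] Y) ⊔ (LinearMap.range (T : X →ₗ[ℝ] Y))ᗮ : Submodule ℝ Y)) :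
    Tendsto (fun n => Tdagn n y) atTop (𝓝 (Tdag y)) ↔
      Filter.limsup (fun n => (‖Tdagn n y‖ : EReal)) atTop ≤ (‖Tdag y‖ : EReal) := by
  refine ⟨fun h => ((continuous_coe_real_ereal.tendsto _).comp h.norm).limsup_eq.le, fun hls => ?_⟩
  have := hfin
  obtain ⟨hker, hTx⟩ := hTdag y hy
  simp only [orthProj_eq_starProjection] at hproj hTn hTdagn hTx
  have hmem : ∀ n, Tdagn n y ∈ Xn n := fun n =>
    orthogonal_ker_comp_starProjection_le T (Xn n) (hTn n ▸ (hTdagn n y).1)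
  have hTxn : ∀ n, T (Tdagn n y) = ((Xn n).map (T : X →ₗ[ℝ] Y)).starProjection y := fun n => by
    rw [← (hTdagn n y).2, hTn n, comp_apply, (starProjection_eq_self_iff).2 (hmem n)]
  have hTconv : Tendsto (fun n => T (Tdagn n y)) atTop (𝓝 (T (Tdag y))) := by
    simp only [hTxn]
    exact tendsto_starProjection_of_tendsto
      (fun n => LinearMap.map_le_range.trans (le_topologicalClosure _))
      (le_topologicalClosure _ (LinearMap.mem_range_self _ _))
      (hTx ▸ sub_starProjection_mem_orthogonal y)
      (fun n => mem_map_of_mem (starProjection_apply_mem _ _))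
      ((T.continuous.tendsto _).comp (hproj (Tdag y)))
  have hbdd := (eventually_lt_of_limsup_coe_le hls (lt_add_one _)).mono fun _ => le_of_lt
  refine tendsto_of_tendsto_inner_of_limsup_norm_le ?_ hls
  simpa only [real_inner_self_eq_norm_sq] using tendsto_inner_of_tendsto_apply T hbdd hTconv hker

/-- For fixed `y ∈ D(T†)`: `Tₙ†y → T†y` in norm iff `limsup ‖Tₙ†y‖ ≤ ‖T†y‖`. -/
theorem stmt17
    (T : X →L[ℝ] Y) (Xn : ℕ → Submodule ℝ X)
    (hfin : ∀ n, FiniteDimensional ℝ (Xn n))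
    (hinf : ¬ FiniteDimensional ℝ X)
    (hproj : ∀ x : X, Tendsto (fun n => orthProj (Xn n) x) atTop (𝓝 x))
    (Tn : ℕ → X →L[ℝ] Y) (hTn : ∀ n, Tn n = T.comp (orthProj (Xn n)))
    (Tdag : Y → X)
    (hTdag : ∀ y ∈ (LinearMap.range (T : X →ₗ[ℝ] Y) ⊔ (LinearMap.range (T : X →ₗ[ℝ] Y))ᗮ : Submodule ℝ Y),
      Tdag y ∈ (LinearMap.ker (T : X →ₗ[ℝ] Y))ᗮ ∧
        T (Tdag y) = orthProj (LinearMap.range (T : X →ₗ[ℝ] Y)).topologicalClosure y)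
    (Tdagn : ℕ → Y → X)
    (hTdagn : ∀ n (y : Y), Tdagn n y ∈ (LinearMap.ker (Tn n : X →ₗ[ℝ] Y))ᗮ ∧
      (Tn n) (Tdagn n y) = orthProj ((Xn n).map (T : X →ₗ[ℝ] Y)) y)
    (y : Y) (hy : y ∈ (LinearMap.range (T : X →ₗ[ℝ] Y) ⊔ (LinearMap.range (T : X →ₗ[ℝ] Y))ᗮ : Submodule ℝ Y)) :
    Tendsto (fun n => Tdagn n y) atTop (𝓝 (Tdag y)) ↔
      Filter.limsup (fun n => (‖Tdagn n y‖ : EReal)) atTop ≤ (‖Tdag y‖ : EReal) :=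
  stmt17_general T Xn hfin hproj Tn hTn Tdag hTdag Tdagn hTdagn y hy
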